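/- arXiv:2008.02370 — 5 statements merged into one kernel-verified Lean document; each statement's English description precedes it below -/
import Mathlib

section
/- There is no pair of functions A : Fin m → (Fin n → {±1}) and B : Fin n → (Fin m → {±1}) such that (i) for every row x, ∏_j A(x)(j) = α(x), (ii) for every column y, ∏_i B(y)(i) = β(y), and (iii) A(x)(y) = B(y)(x) for all x, y — whenever the game parameters satisfy (∏_i α(i)) · (∏_j β(j)) = -1. In particular, no deterministic classical strategy wins an m×n magic rectangle game with certainty. -/
/-! Multiplying all entries of the table row by row gives `∏ α`, column by column `∏ β`;
so `(∏ α) * (∏ β)` is a square and cannot be `-1`. -/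

open Finset

theorem prod_eq_prod_of_row_col_prods {M ι κ : Type*} [CommMonoid M] [Fintype ι] [Fintype κ]
    (A : ι → κ → M) {α : ι → M} {β : κ → M}
    (hrow : ∀ i, ∏ j, A i j = α i) (hcol : ∀ j, ∏ i, A i j = β j) :
    ∏ i, α i = ∏ j, β j :=
  calc ∏ i, α i = ∏ i, ∏ j, A i j := by simp only [hrow]
    _ = ∏ j, ∏ i, A i j := prod_comm
    _ = ∏ j, β j := by simp only [hcol]

theorem stmt2_general {m n : ℕ} (α : Fin m → ℤ) (β : Fin n → ℤ)
    (hprod : (∏ i, α i) * (∏ j, β j) = -1) :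
    ¬ ∃ (A : Fin m → Fin n → ℤ) (B : Fin n → Fin m → ℤ),
      (∀ x y, A x y = 1 ∨ A x y = -1) ∧ (∀ y x, B y x = 1 ∨ B y x = -1) ∧
      (∀ x, ∏ y, A x y = α x) ∧ (∀ y, ∏ x, B y x = β y) ∧
      (∀ x y, A x y = B y x) := by
  rintro ⟨A, B, -, -, hA, hB, hAB⟩
  have hcol : ∀ y, ∏ x, A x y = β y := fun y => by simpa only [hAB] using hB y
  rw [prod_eq_prod_of_row_col_prods A hA hcol] at hprod
  nlinarith [mul_self_nonneg (∏ j, β j)]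

theorem stmt2 {m n : ℕ} (α : Fin m → ℤ) (β : Fin n → ℤ)
    (hα : ∀ i, α i = 1 ∨ α i = -1) (hβ : ∀ j, β j = 1 ∨ β j = -1)
    (hprod : (∏ i, α i) * (∏ j, β j) = -1) :
    ¬ ∃ (A : Fin m → Fin n → ℤ) (B : Fin n → Fin m → ℤ),
      (∀ x y, A x y = 1 ∨ A x y = -1) ∧ (∀ y x, B y x = 1 ∨ B y x = -1) ∧
      (∀ x, ∏ y, A x y = α x) ∧ (∀ y, ∏ x, B y x = β y) ∧
      (∀ x y, A x y = B y x) :=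
  stmt2_general α β hprod
end

section
/- For an m×n magic rectangle game with parameters α, β satisfying ∏α · ∏β = -1, there exist functions A : Fin m → Fin n → {±1} (each row x having product α(x)) and B : Fin n → Fin m → {±1} (each column y having product β(y)) such that A(x)(y) = B(y)(x) for all but exactly one pair (x, y). Consequently, the optimal deterministic classical win probability, with rows and columns chosen uniformly at random, is exactly 1 − 1/(mn). -/
/-!
Over any abelian group, a matrix with row products `r` and column products `c` exists as soon as
`∏ r = ∏ c`: put `r` in column `y₀` and correct the column products by a row `d` in row `x₀`,
whose product is `1`. In the game the sign `t = ∏ α / ∏ β` is `-1 ≠ 1`. Take `A` with row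
products `α` and column products `β`, except `t · β y₀` in column `y₀`, and let `Bᵀ` be `A` with
the entry at `(x₀, y₀)` divided by `t`: then `B` has column products `β` and disagrees with `A`
exactly at `(x₀, y₀)`, so `mn - 1` of the `mn` questions are won.
-/

open Finset

section CommGroup

variable {G ι κ : Type*} [CommGroup G] [Fintype ι] [Fintype κ] [DecidableEq ι] [DecidableEq κ]

theorem exists_matrix_prod_rows_prod_cols (x₀ : ι) (y₀ : κ) (r : ι → G) (c : κ → G)
    (h : ∏ x, r x = ∏ y, c y) :
    ∃ M : ι → κ → G, (∀ x, ∏ y, M x y = r x) ∧ ∀ y, ∏ x, M x y = c y := by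
  set d : κ → G := c / Pi.mulSingle y₀ (∏ x, r x)
  have hd : ∏ y, d y = 1 := by
    simp only [d, Pi.div_apply, prod_div_distrib, Fintype.prod_pi_mulSingle', h, div_self']
  refine ⟨fun x y => (if y = y₀ then r x else 1) * (if x = x₀ then d y else 1),
    fun x => ?_, fun y => ?_⟩
  · rw [prod_mul_distrib]
    by_cases hx : x = x₀ <;> simp [hx, hd]
  · rw [prod_mul_distrib]
    by_cases hy : y = y₀ <;> simp [hy, d]

theorem exists_prod_rows_prod_cols_ne_iff_eq (x₀ : ι) (y₀ : κ) (α : ι → G) (β : κ → G)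
    (h : ∏ x, α x ≠ ∏ y, β y) :
    ∃ (A : ι → κ → G) (B : κ → ι → G), (∀ x, ∏ y, A x y = α x) ∧ (∀ y, ∏ x, B y x = β y) ∧
      ∀ p : ι × κ, A p.1 p.2 ≠ B p.2 p.1 ↔ p = (x₀, y₀) := by
  set t := (∏ x, α x) / ∏ y, β y
  obtain ⟨M, hrow, hcol⟩ := exists_matrix_prod_rows_prod_cols x₀ y₀ α (β * Pi.mulSingle y₀ t)
    (by simp [prod_mul_distrib, t])
  refine ⟨M, fun y x => M x y / if x = x₀ ∧ y = y₀ then t else 1, hrow,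
    fun y => ?_, fun ⟨x, y⟩ => ?_⟩
  · by_cases hy : y = y₀ <;> simp [prod_div_distrib, hcol, hy]
  · have ht : t ≠ 1 := div_ne_one.mpr h
    by_cases hx : x = x₀ <;> by_cases hy : y = y₀ <;>
      simp [hx, hy, eq_comm (a := M x₀ y₀), div_eq_self, ht]

end CommGroup

theorem card_filter_eq_card_sub_one {α : Type*} [Fintype α] [DecidableEq α] {P : α → Prop}
    [DecidablePred P] (a : α) (h : ∀ x, ¬P x ↔ x = a) :
    #{x | P x} = Fintype.card α - 1 := by
  have : ({x | P x} : Finset α) = univ.erase a := by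
    ext x
    simp [← h x]
  rw [this, card_erase_of_mem (mem_univ a), card_univ]

theorem stmt3 {m n : ℕ} (hm : 1 ≤ m) (hn : 1 ≤ n)
    (α : Fin m → ℤ) (β : Fin n → ℤ)
    (hα : ∀ i, α i = 1 ∨ α i = -1) (hβ : ∀ j, β j = 1 ∨ β j = -1)
    (hprod : (∏ i, α i) * (∏ j, β j) = -1) :
    ∃ (A : Fin m → Fin n → ℤ) (B : Fin n → Fin m → ℤ),
      (∀ x y, A x y = 1 ∨ A x y = -1) ∧ (∀ y x, B y x = 1 ∨ B y x = -1) ∧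
      (∀ x, ∏ y, A x y = α x) ∧ (∀ y, ∏ x, B y x = β y) ∧
      (∃! p : Fin m × Fin n, A p.1 p.2 ≠ B p.2 p.1) ∧
      ((Finset.univ.filter fun p : Fin m × Fin n => A p.1 p.2 = B p.2 p.1).card : ℝ)
          / (m * n) = 1 - 1 / (m * n) := by
  lift α to Fin m → ℤˣ using fun i => Int.isUnit_iff.mpr (hα i)
  lift β to Fin n → ℤˣ using fun j => Int.isUnit_iff.mpr (hβ j)
  have hne : ∏ i, α i ≠ ∏ j, β j := by
    intro h
    rw [← Units.coe_prod, ← Units.coe_prod, h, ← Units.val_mul, Int.units_mul_self] at hprod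
    exact absurd hprod (by decide)
  obtain ⟨A, B, hA, hB, hAB⟩ :=
    exists_prod_rows_prod_cols_ne_iff_eq (⟨0, hm⟩ : Fin m) (⟨0, hn⟩ : Fin n) α β hne
  have hAB' : ∀ p : Fin m × Fin n, (A p.1 p.2 : ℤ) ≠ B p.2 p.1 ↔ p = (⟨0, hm⟩, ⟨0, hn⟩) := by
    simpa only [ne_eq, Units.val_inj] using hAB
  refine ⟨fun x y => A x y, fun y x => B y x, fun x y => Int.isUnit_iff.mp (A x y).isUnit,
    fun y x => Int.isUnit_iff.mp (B y x).isUnit, fun x => by rw [← Units.coe_prod, hA],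
    fun y => by rw [← Units.coe_prod, hB], ⟨_, (hAB' _).2 rfl, fun p => (hAB' p).1⟩, ?_⟩
  have hmn : (m * n : ℝ) ≠ 0 := by positivity
  rw [card_filter_eq_card_sub_one _ hAB', Fintype.card_prod,
    Fintype.card_fin, Fintype.card_fin, Nat.cast_sub (Nat.one_le_iff_ne_zero.mpr (by positivity))]
  push_cast
  field_simp
end

section
/- Consider any nonsignaling behavior for a 1×n magic rectangle game (n ≥ 1) with parameters α ∈ {±1} and β : Fin n → {±1} satisfying α · ∏_j β(j) = -1. Then the probability of winning (with Bob's column input uniform on Fin n and Alice's input trivial) is at most 1 − 1/n. Hence the nonsignaling value of any 1×n game equals the classical value 1 − 1/n. -/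
/-! Since `u * u = 1` for every unit of `ℤ`, the hypothesis `α * ∏ β = -1` gives `α ≠ ∏ β`, so every
row `a` in the support of `w` disagrees with `β` in some column. Such a row wins on at most
`n - 1` of Bob's `n` inputs, and averaging over `w` gives the bound. -/

open Finset

theorem Int.units_ne_of_mul_eq_neg_one {u v : ℤˣ} (h : u * v = -1) : u ≠ v := by
  rintro rfl
  rw [Int.units_mul_self] at h
  exact absurd h (by decide)

theorem Finset.exists_ne_of_prod_ne {ι M : Type*} [CommMonoid M] [Fintype ι] {a b : ι → M}
    (h : ∏ j, a j ≠ ∏ j, b j) : ∃ j, a j ≠ b j := by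
  by_contra! hab
  exact h (prod_congr rfl fun j _ => hab j)

theorem sum_agree_le_card_sub_one {ι M : Type*} [Fintype ι] [DecidableEq M] {a b : ι → M}
    (hab : ∃ j, a j ≠ b j) :
    ∑ y, (if a y = b y then (1 : ℝ) else 0) ≤ Fintype.card ι - 1 := by
  obtain ⟨j, hj⟩ := hab
  have hlt : #{y | a y = b y} < Fintype.card ι :=
    card_lt_univ_of_notMem (x := j) (by simpa using hj)
  rw [sum_boole]
  have : (#{y | a y = b y} : ℝ) + 1 ≤ Fintype.card ι := by exact_mod_cast hlt
  linarith

theorem sum_weight_mul_le_of_le {α : Type*} [Fintype α] {w f : α → ℝ} {c : ℝ}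
    (hw0 : ∀ a, 0 ≤ w a) (hw1 : ∑ a, w a = 1) (hf : ∀ a, w a ≠ 0 → f a ≤ c) :
    ∑ a, w a * f a ≤ c := by
  calc ∑ a, w a * f a ≤ ∑ a, w a * c := by
        refine sum_le_sum fun a _ => ?_
        rcases eq_or_ne (w a) 0 with h | h
        · simp [h]
        · exact mul_le_mul_of_nonneg_left (hf a h) (hw0 a)
    _ = c := by rw [← sum_mul, hw1, one_mul]

theorem stmt4_general {n : ℕ} (α : ℤˣ) (β : Fin n → ℤˣ)
    (hprod : α * ∏ j, β j = -1)
    (w : (Fin n → ℤˣ) → ℝ) (hw0 : ∀ a, 0 ≤ w a)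
    (hw1 : ∑ a : Fin n → ℤˣ, w a = 1)
    (hsupp : ∀ a, w a ≠ 0 → ∏ j, a j = α) :
    (1 / n : ℝ) * ∑ y : Fin n, ∑ a : Fin n → ℤˣ,
        w a * (if a y = β y then 1 else 0) ≤ 1 - 1 / n := by
  have hagree : ∑ a : Fin n → ℤˣ, w a * ∑ y, (if a y = β y then (1 : ℝ) else 0) ≤ n - 1 := by
    refine sum_weight_mul_le_of_le hw0 hw1 fun a ha => ?_
    have hne : ∏ j, a j ≠ ∏ j, β j := hsupp a ha ▸ Int.units_ne_of_mul_eq_neg_one hprod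
    simpa using sum_agree_le_card_sub_one (exists_ne_of_prod_ne hne)
  simp_rw [sum_comm (γ := Fin n), ← mul_sum]
  calc (1 / n : ℝ) * ∑ a : Fin n → ℤˣ, w a * ∑ y, (if a y = β y then (1 : ℝ) else 0)
      ≤ 1 / n * (n - 1) := by gcongr
    _ ≤ 1 - 1 / n := by
      rw [mul_sub, one_div_mul_eq_div, mul_one]
      gcongr
      exact div_self_le_one _

theorem stmt4 {n : ℕ} (hn : 1 ≤ n) (α : ℤˣ) (β : Fin n → ℤˣ)
    (hprod : α * ∏ j, β j = -1)
    (w : (Fin n → ℤˣ) → ℝ) (hw0 : ∀ a, 0 ≤ w a)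
    (hw1 : ∑ a : Fin n → ℤˣ, w a = 1)
    (hsupp : ∀ a, w a ≠ 0 → ∏ j, a j = α) :
    (1 / n : ℝ) * ∑ y : Fin n, ∑ a : Fin n → ℤˣ,
        w a * (if a y = β y then 1 else 0) ≤ 1 - 1 / n :=
  stmt4_general α β hprod w hw0 hw1 hsupp
end

section
/- For any m×n magic rectangle game with parameters α, β satisfying ∏α·∏β = -1, and any sequences a ∈ {±1}^m, b ∈ {±1}^n satisfying a_1 = b_1, ∏_{i=1}^m a_i = β_1, and ∏_{j=1}^n b_j = α_1, the derived parameters α'_i := a_{i+1}·α_{i+1} (for 1 ≤ i ≤ m−1) and β'_j := b_{j+1}·β_{j+1} (for 1 ≤ j ≤ n−1) satisfy (∏_{i=1}^{m-1} α'_i)·(∏_{j=1}^{n-1} β'_j) = -1, i.e., they specify a valid (m−1)×(n−1) magic rectangle game. -/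
/-!
Peeling the first factor off each of the four products, the constraints `∏ a = β 0` and
`∏ b = α 0` turn the product rule `∏ α * ∏ β = -1` into `a 0 * b 0 * P = -1`, where `P` is the
product rule of the derived game. Since `a 0 = b 0`, this reads `a 0 ^ 2 * P = -1` in `ℤ`,
which forces `P = -1` because `-1` is not a square in `ℤ`.
-/

open Finset

theorem Fin.mul_mul_prod_succ_mul_prod_succ {M : Type*} [CommMonoid M] {m n : ℕ}
    (a α : Fin (m + 1) → M) (b β : Fin (n + 1) → M)
    (hpa : ∏ i, a i = β 0) (hpb : ∏ j, b j = α 0) :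
    a 0 * b 0 * ((∏ i : Fin m, a i.succ * α i.succ) * ∏ j : Fin n, b j.succ * β j.succ) =
      (∏ i, α i) * ∏ j, β j := by
  rw [Fin.prod_univ_succ] at hpa hpb
  rw [Fin.prod_univ_succ α, Fin.prod_univ_succ β, ← hpa, ← hpb, prod_mul_distrib,
    prod_mul_distrib]
  ac_rfl

theorem Int.eq_neg_one_of_mul_self_mul_eq_neg_one {u x : ℤ} (h : u * u * x = -1) : x = -1 := by
  rcases Int.eq_one_or_neg_one_of_mul_eq_neg_one' h with ⟨-, hx⟩ | ⟨hu, -⟩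
  · exact hx
  · nlinarith [mul_self_nonneg u]

theorem stmt8_general {m n : ℕ} (a α : Fin (m + 2) → ℤ) (b β : Fin (n + 2) → ℤ)
    (hprod : (∏ i, α i) * (∏ j, β j) = -1)
    (hab : a 0 = b 0)
    (hpa : ∏ i, a i = β 0) (hpb : ∏ j, b j = α 0) :
    (∏ i : Fin (m + 1), a i.succ * α i.succ) *
      (∏ j : Fin (n + 1), b j.succ * β j.succ) = -1 := by
  apply Int.eq_neg_one_of_mul_self_mul_eq_neg_one (u := a 0)
  nth_rw 2 [hab]
  rw [Fin.mul_mul_prod_succ_mul_prod_succ a α b β hpa hpb, hprod]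

theorem stmt8 {m n : ℕ} (a α : Fin (m + 2) → ℤ) (b β : Fin (n + 2) → ℤ)
    (ha : ∀ i, a i = 1 ∨ a i = -1) (hα : ∀ i, α i = 1 ∨ α i = -1)
    (hb : ∀ j, b j = 1 ∨ b j = -1) (hβ : ∀ j, β j = 1 ∨ β j = -1)
    (hprod : (∏ i, α i) * (∏ j, β j) = -1)
    (hab : a 0 = b 0)
    (hpa : ∏ i, a i = β 0) (hpb : ∏ j, b j = α 0) :
    (∏ i : Fin (m + 1), a i.succ * α i.succ) *
      (∏ j : Fin (n + 1), b j.succ * β j.succ) = -1 :=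
  stmt8_general a α b β hprod hab hpa hpb
end

section
/- Distinguished-input value formula (strategy direction): for m, n ≥ 2 and any level of correlations with optimal m'×n' win probability ω(m', n'), there exists a strategy for the m×n game that is deterministic on one distinguished input and wins with probability exactly 1 − ((m−1)(n−1)/(mn))·(1 − ω(m−1, n−1)). In the classical deterministic setting with ω(m−1,n−1) = 1 − 1/((m−1)(n−1)), this probability is 1 − 1/(mn). -/
/-!
Border the smaller strategy with a row and a column of `+1` outputs: on every input involving
the new first row or column both players answer `+1` and win, which accounts for the
`(M + 2) + (N + 2) - 1` inputs of that cross, while on the remaining inputs the new strategy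
is the old one. Bordering by `1` changes no row or column product of the old inputs.
-/

open Finset

section

variable {R : Type*} {m n : ℕ}

def padOne [One R] (A : Fin m → Fin n → R) : Fin (m + 1) → Fin (n + 1) → R :=
  Fin.cases (fun _ => 1) fun x => Fin.cases 1 (A x)

@[simp]
theorem padOne_zero [One R] (A : Fin m → Fin n → R) (y : Fin (n + 1)) : padOne A 0 y = 1 :=
  rfl

@[simp]
theorem padOne_apply_zero [One R] (A : Fin m → Fin n → R) (x : Fin (m + 1)) :
    padOne A x 0 = 1 := by
  cases x using Fin.cases <;> rfl

@[simp]
theorem padOne_succ_succ [One R] (A : Fin m → Fin n → R) (x : Fin m) (y : Fin n) :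
    padOne A x.succ y.succ = A x y :=
  rfl

theorem padOne_of_forall [One R] {P : R → Prop} (h1 : P 1) {A : Fin m → Fin n → R}
    (hA : ∀ x y, P (A x y)) (x : Fin (m + 1)) (y : Fin (n + 1)) : P (padOne A x y) := by
  cases x using Fin.cases <;> cases y using Fin.cases <;> simp [h1, hA]

theorem prod_padOne_succ [CommMonoid R] (A : Fin m → Fin n → R) (x : Fin m) :
    ∏ y, padOne A x.succ y = ∏ y, A x y := by
  simp [Fin.prod_univ_succ]

theorem card_padOne_agree [One R] [DecidableEq R] (A : Fin m → Fin n → R)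
    (B : Fin n → Fin m → R) :
    #{p : Fin (m + 1) × Fin (n + 1) | padOne A p.1 p.2 = padOne B p.2 p.1}
      = (m + 1) + (n + 1) - 1 + #{p : Fin m × Fin n | A p.1 p.2 = B p.2 p.1} := by
  simp only [card_filter, Fintype.sum_prod_type, Fin.sum_univ_succ, padOne_zero,
    padOne_apply_zero, padOne_succ_succ, if_true, sum_const, card_univ, Fintype.card_fin,
    smul_eq_mul, mul_one, sum_add_distrib]
  rw [show m + 1 + (n + 1) - 1 = 1 + m + n by omega]
  -- the two double sums differ only in their (defeq) decidability instances, invisible to `omega`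
  ac_rfl

end

theorem stmt17_general {M N : ℕ}
    (A' : Fin (M + 1) → Fin (N + 1) → ℤ) (B' : Fin (N + 1) → Fin (M + 1) → ℤ)
    (α' : Fin (M + 1) → ℤ) (β' : Fin (N + 1) → ℤ)
    (hA' : ∀ x y, A' x y = 1 ∨ A' x y = -1)
    (hB' : ∀ y x, B' y x = 1 ∨ B' y x = -1)
    (hrow' : ∀ x, ∏ y, A' x y = α' x) (hcol' : ∀ y, ∏ x, B' y x = β' y)
    (k : ℕ)
    (hk : (Finset.univ.filter
        fun p : Fin (M + 1) × Fin (N + 1) => A' p.1 p.2 = B' p.2 p.1).card = k) :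
    ∃ (A : Fin (M + 2) → Fin (N + 2) → ℤ) (B : Fin (N + 2) → Fin (M + 2) → ℤ),
      (∀ x y, A x y = 1 ∨ A x y = -1) ∧ (∀ y x, B y x = 1 ∨ B y x = -1) ∧
      -- row 1 and column 1 products are +1
      (∏ y, A 0 y = 1) ∧ (∏ x, B 0 x = 1) ∧
      -- remaining row and column products are those of the smaller game
      (∀ x : Fin (M + 1), ∏ y, A x.succ y = α' x) ∧
      (∀ y : Fin (N + 1), ∏ x, B y.succ x = β' y) ∧
      -- first entries of all outputs are +1
      (∀ x, A x 0 = 1) ∧ (∀ y, B y 0 = 1) ∧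
      (∀ y, A 0 y = 1) ∧ (∀ x, B 0 x = 1) ∧
      -- the strategy wins on exactly (m + n − 1) + k of the mn inputs
      (Finset.univ.filter
          fun p : Fin (M + 2) × Fin (N + 2) => A p.1 p.2 = B p.2 p.1).card
        = ((M + 2) + (N + 2) - 1) + k := by
  have one_or_neg_one : (1 : ℤ) = 1 ∨ (1 : ℤ) = -1 := .inl rfl
  refine ⟨padOne A', padOne B',
    padOne_of_forall (P := fun r => r = 1 ∨ r = -1) one_or_neg_one hA',
    padOne_of_forall (P := fun r => r = 1 ∨ r = -1) one_or_neg_one hB', by simp, by simp,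
    fun x => (prod_padOne_succ A' x).trans (hrow' x),
    fun y => (prod_padOne_succ B' y).trans (hcol' y),
    padOne_apply_zero A', padOne_apply_zero B', padOne_zero A', padOne_zero B', ?_⟩
  rw [← hk]
  exact card_padOne_agree A' B'

theorem stmt17 {M N : ℕ}
    (A' : Fin (M + 1) → Fin (N + 1) → ℤ) (B' : Fin (N + 1) → Fin (M + 1) → ℤ)
    (α' : Fin (M + 1) → ℤ) (β' : Fin (N + 1) → ℤ)
    (hA' : ∀ x y, A' x y = 1 ∨ A' x y = -1)
    (hB' : ∀ y x, B' y x = 1 ∨ B' y x = -1)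
    (hrow' : ∀ x, ∏ y, A' x y = α' x) (hcol' : ∀ y, ∏ x, B' y x = β' y)
    (hprod' : (∏ i, α' i) * (∏ j, β' j) = -1)
    (k : ℕ)
    (hk : (Finset.univ.filter
        fun p : Fin (M + 1) × Fin (N + 1) => A' p.1 p.2 = B' p.2 p.1).card = k) :
    ∃ (A : Fin (M + 2) → Fin (N + 2) → ℤ) (B : Fin (N + 2) → Fin (M + 2) → ℤ),
      (∀ x y, A x y = 1 ∨ A x y = -1) ∧ (∀ y x, B y x = 1 ∨ B y x = -1) ∧
      -- row 1 and column 1 products are +1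
      (∏ y, A 0 y = 1) ∧ (∏ x, B 0 x = 1) ∧
      -- remaining row and column products are those of the smaller game
      (∀ x : Fin (M + 1), ∏ y, A x.succ y = α' x) ∧
      (∀ y : Fin (N + 1), ∏ x, B y.succ x = β' y) ∧
      -- first entries of all outputs are +1
      (∀ x, A x 0 = 1) ∧ (∀ y, B y 0 = 1) ∧
      (∀ y, A 0 y = 1) ∧ (∀ x, B 0 x = 1) ∧
      -- the strategy wins on exactly (m + n − 1) + k of the mn inputs
      (Finset.univ.filter
          fun p : Fin (M + 2) × Fin (N + 2) => A p.1 p.2 = B p.2 p.1).card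
        = ((M + 2) + (N + 2) - 1) + k :=
  stmt17_general A' B' α' β' hA' hB' hrow' hcol' k hk
end
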